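/- arXiv:1305.2155 — 9 statements merged into one kernel-verified Lean document; each statement's English description precedes it below -/
import Mathlib

section
/- If a set C with |C| ≥ 3 admits m pairwise distinct pairs of witnesses (pairs disjoint from C, each pair witnessing all elements of C via a ternary relation R, with no two distinct witness-pairs sharing a generating relation), and the ambient finite R-structure B containing C and all witnesses satisfies d₀(X) = |X| − r(X) ≥ 0 for every subset X of B, then m·(|C| − 2) ≤ |C|. -/
/-!
Every pair `c ∈ C`, `w ∈ W` yields the relation `{c} ∪ w`, and these `|C|·m` relations are
pairwise distinct, so the set `X = C ∪ ⋃ W` of at most `|C| + 2m` points carries at least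
`|C|·m` relations. Nonnegativity of `d₀(X)` then gives `|C|·m ≤ |C| + 2m`.
-/

variable {α : Type*} [DecidableEq α]

/-- `R` is a symmetric, irreflexive ternary relation (invariant under permutations of
the arguments, holding only on triples of pairwise distinct elements). -/
def SymIrr (R : α → α → α → Prop) : Prop :=
  (∀ x y z, R x y z → R y x z) ∧ (∀ x y z, R x y z → R x z y) ∧
  (∀ x y z, R x y z → x ≠ y ∧ x ≠ z ∧ y ≠ z)

/-- `r(X)`: the number of three-element subsets `{x,y,z}` of `X` with `R x y z`. -/
noncomputable def rCount (R : α → α → α → Prop) (X : Finset α) : ℕ :=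
  {s : Finset α | s ⊆ X ∧ ∃ x y z : α, x ≠ y ∧ x ≠ z ∧ y ≠ z ∧ s = {x, y, z} ∧ R x y z}.ncard

/-- The predimension `d₀(X) = |X| - r(X)`. -/
noncomputable def d0 (R : α → α → α → Prop) (X : Finset α) : ℤ :=
  (X.card : ℤ) - (rCount R X : ℤ)

open Finset

def generatingTriples (C : Finset α) (W : Finset (Finset α)) : Finset (Finset α) :=
  (C ×ˢ W).image fun p => insert p.1 p.2

theorem card_le_rCount (R : α → α → α → Prop) (X : Finset α) (T : Finset (Finset α))
    (hT : ∀ s ∈ T, s ⊆ X ∧ ∃ x y z : α, x ≠ y ∧ x ≠ z ∧ y ≠ z ∧ s = {x, y, z} ∧ R x y z) :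
    #T ≤ rCount R X := by
  rw [rCount, ← Set.ncard_coe_finset]
  refine Set.ncard_le_ncard hT (X.powerset.finite_toSet.subset fun s hs => ?_)
  simpa using hs.1

theorem rCount_le_card_of_d0_nonneg {R : α → α → α → Prop} {X : Finset α} (h : 0 ≤ d0 R X) :
    rCount R X ≤ #X := by
  unfold d0 at h
  omega

theorem card_generatingTriples {C : Finset α} {W : Finset (Finset α)}
    (hdisj : ∀ w ∈ W, Disjoint w C)
    (hshare : ∀ w1 ∈ W, ∀ w2 ∈ W, w1 ≠ w2 →
      ∀ c1 ∈ C, ∀ c2 ∈ C, insert c1 w1 ≠ insert c2 w2) :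
    #(generatingTriples C W) = #C * #W := by
  rw [generatingTriples, card_image_of_injOn, card_product]
  rintro ⟨c1, w1⟩ hp ⟨c2, w2⟩ hq (heq : insert c1 w1 = insert c2 w2)
  simp only [coe_product, Set.mem_prod, mem_coe] at hp hq
  obtain rfl : w1 = w2 := by
    by_contra hne
    exact hshare w1 hp.2 w2 hq.2 hne c1 hp.1 c2 hq.1 heq
  have hc1 : c1 ∈ insert c2 w1 := heq ▸ mem_insert_self c1 w1
  rcases mem_insert.1 hc1 with rfl | hc1w
  · rfl
  · exact absurd hp.1 (disjoint_left.1 (hdisj w1 hp.2) hc1w)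

theorem insert_witness_isTriple {R : α → α → α → Prop} {c : α} {w : Finset α}
    (hw : #w = 2) (hc : c ∉ w) (hR : ∀ x ∈ w, ∀ y ∈ w, x ≠ y → R c x y) :
    ∃ x y z : α, x ≠ y ∧ x ≠ z ∧ y ≠ z ∧ insert c w = {x, y, z} ∧ R x y z := by
  obtain ⟨b1, b2, hb, rfl⟩ := card_eq_two.1 hw
  simp only [mem_insert, mem_singleton, not_or] at hc
  exact ⟨c, b1, b2, hc.1, hc.2, hb, rfl, hR b1 (by simp) b2 (by simp) hb⟩

theorem generatingTriples_isTriple {R : α → α → α → Prop} {C : Finset α}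
    {W : Finset (Finset α)}
    (hW : ∀ w ∈ W, #w = 2 ∧ Disjoint w C ∧ ∀ c ∈ C, ∀ x ∈ w, ∀ y ∈ w, x ≠ y → R c x y) :
    ∀ s ∈ generatingTriples C W, s ⊆ C ∪ W.biUnion id ∧
      ∃ x y z : α, x ≠ y ∧ x ≠ z ∧ y ≠ z ∧ s = {x, y, z} ∧ R x y z := by
  simp only [generatingTriples, mem_image, mem_product]
  rintro _ ⟨⟨c, w⟩, ⟨hc, hw⟩, rfl⟩
  obtain ⟨hcard, hdisj, hR⟩ := hW w hw
  refine ⟨insert_subset (mem_union_left _ hc) fun x hx => ?_,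
    insert_witness_isTriple hcard (disjoint_right.1 hdisj hc) (hR c hc)⟩
  exact mem_union_right _ (mem_biUnion.2 ⟨w, hw, hx⟩)

theorem stmt0_general (R : α → α → α → Prop)
    (B C : Finset α) (hCB : C ⊆ B)
    (hd : ∀ X : Finset α, X ⊆ B → 0 ≤ d0 R X)
    (m : ℕ) (W : Finset (Finset α)) (hm : W.card = m)
    (hW : ∀ w ∈ W, w.card = 2 ∧ Disjoint w C ∧ w ⊆ B ∧
      ∀ c ∈ C, ∀ x ∈ w, ∀ y ∈ w, x ≠ y → R c x y)
    (hshare : ∀ w1 ∈ W, ∀ w2 ∈ W, w1 ≠ w2 →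
      ∀ c1 ∈ C, ∀ c2 ∈ C, insert c1 w1 ≠ insert c2 w2) :
    m * (C.card - 2) ≤ C.card := by
  subst hm
  set X := C ∪ W.biUnion id
  have hXB : X ⊆ B := union_subset hCB (biUnion_subset.2 fun w hw => (hW w hw).2.2.1)
  have hcardX : #X ≤ #C + #W * 2 :=
    (card_union_le _ _).trans (Nat.add_le_add_left
      (card_biUnion_le_card_mul W id 2 fun w hw => (hW w hw).1.le) _)
  have hrels : #C * #W ≤ rCount R X := by
    rw [← card_generatingTriples (fun w hw => (hW w hw).2.1) hshare]
    exact card_le_rCount R X _ <| generatingTriples_isTriple fun w hw =>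
      ⟨(hW w hw).1, (hW w hw).2.1, (hW w hw).2.2.2⟩
  have hr := rCount_le_card_of_d0_nonneg (hd X hXB)
  rw [Nat.mul_sub, mul_comm]
  omega

/-- if `C ⊆ B` with `|C| ≥ 3` admits `m` pairwise distinct witness pairs
(each a 2-element set disjoint from `C`, contained in `B`, witnessing all of `C`, and
no two distinct witness pairs sharing a generating relation), and every subset of the
finite `R`-structure `B` has nonnegative predimension, then `m·(|C|-2) ≤ |C|`. -/
theorem stmt0 (R : α → α → α → Prop) (hR : SymIrr R)
    (B C : Finset α) (hCB : C ⊆ B) (hC : 3 ≤ C.card)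
    (hd : ∀ X : Finset α, X ⊆ B → 0 ≤ d0 R X)
    (m : ℕ) (W : Finset (Finset α)) (hm : W.card = m)
    (hW : ∀ w ∈ W, w.card = 2 ∧ Disjoint w C ∧ w ⊆ B ∧
      ∀ c ∈ C, ∀ x ∈ w, ∀ y ∈ w, x ≠ y → R c x y)
    (hshare : ∀ w1 ∈ W, ∀ w2 ∈ W, w1 ≠ w2 →
      ∀ c1 ∈ C, ∀ c2 ∈ C, insert c1 w1 ≠ insert c2 w2) :
    m * (C.card - 2) ≤ C.card :=
  stmt0_general R B C hCB hd m W hm hW hshare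
end

section
/- If two distinct maximal S-cliques (C₁,{x₁,y₁}) and (C₂,{x₂,y₂}) in an R-structure share a generating relation r, then their witness pairs intersect in exactly one point x, the shared relation equals {x,y₁,y₂} (the union of the two witness pairs), it is the unique shared relation, and moreover y₂ ∈ C₁ and y₁ ∈ C₂. -/
/-!
By maximality, a witness pair determines its clique, so the two witness pairs are distinct.
A shared relation `{c₁, x₁, y₁} = {c₂, x₂, y₂}` has at most three points and contains both
pairs, so the pairs meet in a point `x`; writing them `{x, y₁'}` and `{x, y₂'}`, the point `y₂'`
of the relation lies outside `{x, y₁'}` and hence equals `c₁`, and symmetrically `c₂ = y₁'`.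
-/

variable {α : Type*} [DecidableEq α]

/-- `(C, {x,y})` is an S-clique: `|C| ≥ 3`, the witnesses are distinct and
outside `C`, and `R c x y` for all `c ∈ C`. -/
def IsCliqueW (R : α → α → α → Prop) (C : Finset α) (x y : α) : Prop :=
  3 ≤ C.card ∧ x ≠ y ∧ x ∉ C ∧ y ∉ C ∧ ∀ c ∈ C, R c x y

/-- `(C, {x,y})` is a maximal S-clique in `A`: additionally `C ⊆ A` and no element of
`A \ (C ∪ {x,y})` is `R`-related to the witness pair. -/
def IsMaxCliqueIn (R : α → α → α → Prop) (A : Set α) (C : Finset α) (x y : α) : Prop :=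
  IsCliqueW R C x y ∧ ↑C ⊆ A ∧ ∀ a ∈ A, a ∉ C → a ≠ x → a ≠ y → ¬ R a x y

namespace Finset

theorem exists_ne_and_pair_eq_of_mem {a b x : α} (hab : a ≠ b) (hx : x ∈ ({a, b} : Finset α)) :
    ∃ y, x ≠ y ∧ ({a, b} : Finset α) = {x, y} := by
  rcases mem_insert.1 hx with rfl | hx
  · exact ⟨b, hab, rfl⟩
  · rw [mem_singleton.1 hx]
    exact ⟨a, hab.symm, pair_comm a b⟩

theorem exists_mem_pair_of_insert_eq {c₁ c₂ x₁ y₁ x₂ y₂ : α}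
    (h : insert c₁ ({x₁, y₁} : Finset α) = insert c₂ {x₂, y₂}) (hxy₂ : x₂ ≠ y₂) :
    ∃ x, x ∈ ({x₁, y₁} : Finset α) ∧ x ∈ ({x₂, y₂} : Finset α) := by
  have hx₂ : x₂ ∈ insert c₁ ({x₁, y₁} : Finset α) := h ▸ by simp
  have hy₂ : y₂ ∈ insert c₁ ({x₁, y₁} : Finset α) := h ▸ by simp
  rcases mem_insert.1 hx₂ with rfl | hx₂
  · exact ⟨y₂, (mem_insert.1 hy₂).resolve_left hxy₂.symm, by simp⟩
  · exact ⟨x₂, hx₂, by simp⟩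

theorem eq_of_insert_pair_eq {c₁ c₂ x y₁ y₂ : α}
    (h : insert c₁ ({x, y₁} : Finset α) = insert c₂ {x, y₂}) (hxy₂ : x ≠ y₂) (hy : y₁ ≠ y₂) :
    c₁ = y₂ := by
  have hy₂ : y₂ ∈ insert c₁ ({x, y₁} : Finset α) := h ▸ by simp
  exact (eq_of_mem_insert_of_notMem hy₂ (by simp [hxy₂.symm, hy.symm])).symm

theorem pair_inter_pair_of_ne {x y₁ y₂ : α} (hy : y₁ ≠ y₂) :
    ({x, y₁} : Finset α) ∩ {x, y₂} = {x} := by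
  rw [← insert_inter_distrib, singleton_inter_of_notMem (by simpa using hy)]
  rfl

end Finset

theorem IsCliqueW.notMem_pair {R : α → α → α → Prop} {C : Finset α} {x y c : α}
    (h : IsCliqueW R C x y) (hc : c ∈ C) : c ∉ ({x, y} : Finset α) := by
  obtain ⟨-, -, hx, hy, -⟩ := h
  simp only [Finset.mem_insert, Finset.mem_singleton, not_or]
  exact ⟨fun h ↦ hx (h ▸ hc), fun h ↦ hy (h ▸ hc)⟩

theorem rel_of_pair_eq {R : α → α → α → Prop} (hR : ∀ a x y, R a x y → R a y x)
    {a x y x' y' : α} (h : R a x y) (hp : ({x, y} : Finset α) = {x', y'}) : R a x' y' := by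
  have hp' : ({x, y} : Set α) = {x', y'} := by simpa using congrArg ((↑) : Finset α → Set α) hp
  rcases Set.pair_eq_pair_iff.1 hp' with ⟨rfl, rfl⟩ | ⟨rfl, rfl⟩
  · exact h
  · exact hR _ _ _ h

theorem IsMaxCliqueIn.subset_of_pair_eq {R : α → α → α → Prop}
    (hR : ∀ a x y, R a x y → R a y x) {A : Set α} {C₁ C₂ : Finset α} {x₁ y₁ x₂ y₂ : α}
    (h₁ : IsMaxCliqueIn R A C₁ x₁ y₁) (h₂ : IsMaxCliqueIn R A C₂ x₂ y₂)
    (hp : ({x₁, y₁} : Finset α) = {x₂, y₂}) : C₁ ⊆ C₂ := by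
  intro a ha
  by_contra haC₂
  have ha₂ : a ∉ ({x₂, y₂} : Finset α) := hp ▸ h₁.1.notMem_pair ha
  simp only [Finset.mem_insert, Finset.mem_singleton, not_or] at ha₂
  exact h₂.2.2 a (h₁.2.1 ha) haC₂ ha₂.1 ha₂.2 (rel_of_pair_eq hR (h₁.1.2.2.2.2 a ha) hp)

theorem IsMaxCliqueIn.eq_of_pair_eq {R : α → α → α → Prop}
    (hR : ∀ a x y, R a x y → R a y x) {A : Set α} {C₁ C₂ : Finset α} {x₁ y₁ x₂ y₂ : α}
    (h₁ : IsMaxCliqueIn R A C₁ x₁ y₁) (h₂ : IsMaxCliqueIn R A C₂ x₂ y₂)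
    (hp : ({x₁, y₁} : Finset α) = {x₂, y₂}) : C₁ = C₂ :=
  (h₁.subset_of_pair_eq hR h₂ hp).antisymm (h₂.subset_of_pair_eq hR h₁ hp.symm)

/-- if two distinct maximal S-cliques `(C₁,{x₁,y₁})`, `(C₂,{x₂,y₂})`
share a generating relation, then their witness pairs intersect in exactly one point
`x`, the shared relation is `{x, y₁', y₂'}` (the union of the two witness pairs),
it is the unique shared relation, and `y₂' ∈ C₁`, `y₁' ∈ C₂`. -/
theorem stmt2 (R : α → α → α → Prop) (hR : SymIrr R) (A : Set α)
    (C1 C2 : Finset α) (x1 y1 x2 y2 : α)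
    (h1 : IsMaxCliqueIn R A C1 x1 y1) (h2 : IsMaxCliqueIn R A C2 x2 y2)
    (hdist : ¬ (C1 = C2 ∧ ({x1, y1} : Finset α) = {x2, y2}))
    (c1 : α) (hc1 : c1 ∈ C1) (c2 : α) (hc2 : c2 ∈ C2)
    (hr : insert c1 ({x1, y1} : Finset α) = insert c2 ({x2, y2} : Finset α)) :
    ∃ x ya yb : α,
      ({x1, y1} : Finset α) = {x, ya} ∧
      ({x2, y2} : Finset α) = {x, yb} ∧
      ya ≠ yb ∧
      ({x1, y1} : Finset α) ∩ ({x2, y2} : Finset α) = {x} ∧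
      insert c1 ({x1, y1} : Finset α) = {x, ya, yb} ∧
      yb ∈ C1 ∧ ya ∈ C2 ∧
      (∀ c1' ∈ C1, ∀ c2' ∈ C2,
        insert c1' ({x1, y1} : Finset α) = insert c2' ({x2, y2} : Finset α) →
        insert c1' ({x1, y1} : Finset α) = ({x, ya, yb} : Finset α)) := by
  have hP : ({x1, y1} : Finset α) ≠ {x2, y2} := fun hp ↦ hdist ⟨h1.eq_of_pair_eq hR.2.1 h2 hp, hp⟩
  obtain ⟨x, hx1, hx2⟩ := Finset.exists_mem_pair_of_insert_eq hr h2.1.2.1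
  obtain ⟨ya, hxa, hPa⟩ := Finset.exists_ne_and_pair_eq_of_mem h1.1.2.1 hx1
  obtain ⟨yb, hxb, hPb⟩ := Finset.exists_ne_and_pair_eq_of_mem h2.1.2.1 hx2
  rw [hPa, hPb] at hr hP ⊢
  have hab : ya ≠ yb := by rintro rfl; exact hP rfl
  have hunion : insert yb ({x, ya} : Finset α) = {x, ya, yb} := by
    rw [Finset.insert_comm, Finset.pair_comm]
  obtain rfl : yb = c1 := (Finset.eq_of_insert_pair_eq hr hxb hab).symm
  obtain rfl : ya = c2 := (Finset.eq_of_insert_pair_eq hr.symm hxa hab.symm).symm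
  refine ⟨x, ya, yb, rfl, rfl, hab, Finset.pair_inter_pair_of_ne hab, hunion, hc1, hc2, ?_⟩
  intro c1' _ c2' _ hr'
  rw [Finset.eq_of_insert_pair_eq hr' hxb hab, hunion]
end

section
/- Let A ⊆ N be R-structures and let C be the universe of a clique in N witnessed externally by a pair {b₁,b₂} (both witnesses outside A ∪ C). Then d₀(b₁,b₂/A) ≤ 2 − |C|; if exactly one witness is outside A, then d₀(b₁,b₂/A) ≤ 1 − |C|. -/
variable {α : Type*} [DecidableEq α]

open Finset

def rTriples (R : α → α → α → Prop) (X : Finset α) : Set (Finset α) :=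
  {s : Finset α | s ⊆ X ∧ ∃ x y z : α, x ≠ y ∧ x ≠ z ∧ y ≠ z ∧ s = {x, y, z} ∧ R x y z}

namespace rTriples

variable {R : α → α → α → Prop}

lemma ncard_eq_rCount (X : Finset α) : (rTriples R X).ncard = rCount R X := rfl

lemma finite (X : Finset α) : (rTriples R X).Finite :=
  (X.powerset : Finset (Finset α)).finite_toSet.subset fun _ hs => mem_powerset.2 hs.1

lemma mono {X Y : Finset α} (h : X ⊆ Y) : rTriples R X ⊆ rTriples R Y :=
  fun _ hs => ⟨hs.1.trans h, hs.2⟩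

lemma triple_mem {X : Finset α} {x y z : α} (hxy : x ≠ y) (hxz : x ≠ z) (hyz : y ≠ z)
    (hR : R x y z) (hx : x ∈ X) (hy : y ∈ X) (hz : z ∈ X) : {x, y, z} ∈ rTriples R X := by
  refine ⟨?_, x, y, z, hxy, hxz, hyz, rfl, hR⟩
  simp only [insert_subset_iff, singleton_subset_iff]
  exact ⟨hx, hy, hz⟩

end rTriples

lemma insert_pair_injOn {C : Finset α} {b1 b2 : α} (hb1 : b1 ∉ C) (hb2 : b2 ∉ C) :
    Set.InjOn (fun c => ({c, b1, b2} : Finset α)) C := by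
  intro c hc c' _ h
  have h : ({c, b1, b2} : Finset α) = {c', b1, b2} := h
  have hc' : c ∈ ({c', b1, b2} : Finset α) := h ▸ mem_insert_self _ _
  simp only [mem_insert, mem_singleton] at hc'
  rcases hc' with rfl | rfl | rfl
  exacts [rfl, (hb1 hc).elim, (hb2 hc).elim]

/-- Each `c ∈ C` yields the new triple `{c, b₁, b₂}`, which is not inside `A` because one of the
witnesses is not. -/
lemma rCount_add_card_le_rCount_union_pair (R : α → α → α → Prop) {A C : Finset α}
    (hCA : C ⊆ A) {b1 b2 : α} (hne : b1 ≠ b2) (hb1 : b1 ∉ C) (hb2 : b2 ∉ C)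
    (hw : ∀ c ∈ C, R c b1 b2) (hout : b1 ∉ A ∨ b2 ∉ A) :
    rCount R A + #C ≤ rCount R (A ∪ {b1, b2}) := by
  set new := (fun c => ({c, b1, b2} : Finset α)) '' (C : Set α)
  have hnew : new ⊆ rTriples R (A ∪ {b1, b2}) := by
    rintro _ ⟨c, hc, rfl⟩
    exact rTriples.triple_mem (ne_of_mem_of_not_mem hc hb1) (ne_of_mem_of_not_mem hc hb2) hne
      (hw c hc) (mem_union_left _ (hCA hc)) (by simp) (by simp)
  have hdisj : Disjoint (rTriples R A) new := by
    rw [Set.disjoint_left]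
    rintro s hs ⟨c, -, rfl⟩
    rcases hout with h | h <;> exact h (hs.1 (by simp))
  have hfin := rTriples.finite (R := R) (A ∪ {b1, b2})
  rw [← rTriples.ncard_eq_rCount, ← rTriples.ncard_eq_rCount, ← Set.ncard_coe_finset C,
    ← (insert_pair_injOn hb1 hb2).ncard_image,
    ← Set.ncard_union_eq hdisj (hfin.subset (rTriples.mono subset_union_left)) (hfin.subset hnew)]
  exact Set.ncard_le_ncard (Set.union_subset (rTriples.mono subset_union_left) hnew) hfin

lemma card_union_pair_le_of_mem_right (A : Finset α) (b1 : α) {b2 : α} (hb2 : b2 ∈ A) :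
    #(A ∪ {b1, b2}) ≤ #A + 1 := by
  rw [union_insert, union_eq_left.2 (singleton_subset_iff.2 hb2)]
  exact card_insert_le _ _

lemma d0_union_sub_le {R : α → α → α → Prop} {A B : Finset α} {m k : ℕ}
    (hcard : #(A ∪ B) ≤ #A + m) (hr : rCount R A + k ≤ rCount R (A ∪ B)) :
    d0 R (A ∪ B) - d0 R A ≤ m - k := by
  unfold d0
  omega

theorem stmt3_general (R : α → α → α → Prop)
    (A C : Finset α) (hCA : C ⊆ A)
    (b1 b2 : α) (hne : b1 ≠ b2) (hb1 : b1 ∉ C) (hb2 : b2 ∉ C)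
    (hw : ∀ c ∈ C, R c b1 b2) :
    (b1 ∉ A → b2 ∉ A →
      d0 R (A ∪ {b1, b2}) - d0 R A ≤ 2 - (C.card : ℤ)) ∧
    ((b1 ∉ A ∧ b2 ∈ A) ∨ (b1 ∈ A ∧ b2 ∉ A) →
      d0 R (A ∪ {b1, b2}) - d0 R A ≤ 1 - (C.card : ℤ)) := by
  have hr := rCount_add_card_le_rCount_union_pair R hCA hne hb1 hb2 hw
  refine ⟨fun h1 _ => ?_, ?_⟩
  · exact_mod_cast d0_union_sub_le ((card_union_le _ _).trans (by gcongr; exact card_le_two))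
      (hr (.inl h1))
  · rintro (⟨h1, h2⟩ | ⟨h1, h2⟩)
    · exact_mod_cast d0_union_sub_le (card_union_pair_le_of_mem_right A b1 h2) (hr (.inl h1))
    · rw [pair_comm] at hr ⊢
      exact_mod_cast d0_union_sub_le (card_union_pair_le_of_mem_right A b2 h1) (hr (.inr h2))

/-- if `C ⊆ A` is the universe of a clique witnessed by `{b₁,b₂}` with both
witnesses outside `A`, then `d₀(b₁,b₂/A) ≤ 2 - |C|`; if exactly one witness is outside
`A`, then `d₀(b₁,b₂/A) ≤ 1 - |C|`. -/
theorem stmt3 (R : α → α → α → Prop) (hR : SymIrr R)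
    (A C : Finset α) (hCA : C ⊆ A)
    (b1 b2 : α) (hne : b1 ≠ b2) (hb1 : b1 ∉ C) (hb2 : b2 ∉ C)
    (hw : ∀ c ∈ C, R c b1 b2) :
    (b1 ∉ A → b2 ∉ A →
      d0 R (A ∪ {b1, b2}) - d0 R A ≤ 2 - (C.card : ℤ)) ∧
    ((b1 ∉ A ∧ b2 ∈ A) ∨ (b1 ∈ A ∧ b2 ∉ A) →
      d0 R (A ∪ {b1, b2}) - d0 R A ≤ 1 - (C.card : ℤ)) :=
  stmt3_general R A C hCA b1 b2 hne hb1 hb2 hw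
end

section
/- Let N be an S-structure and B₁, B₂ ⊆ N finite substructures with A = B₁ ∩ B₂ and D = B₁ ∪ B₂. Then d₀ₛ(B₂/A) ≥ d₀ₛ(B₂/B₁) (submodularity of the S-predimension). Moreover, if every maximal clique of D not extending a clique of A lies entirely within B₁ or entirely within B₂ (i.e. C(D/A) = C(B₁/A) ∪ C(B₂/A)), then equality holds. -/
variable {α : Type*} [DecidableEq α] {β : Type*} [DecidableEq β]

/-- `|X|* = max(0, |X| - 2)`. -/
def cardStar (X : Finset α) : ℤ := max 0 ((X.card : ℤ) - 2)

/-- An S-structure: a carrier set together with a pre-multiplicity function `pm` on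
finite sets (its support being the set of declared maximal cliques, each a subset of the
carrier of size `≥ 3`, with pre-multiplicity at most 3), such that every finite set meets
only finitely many cliques in `≥ 3` points, and the associated multiplicity function
`m(D) = Σ_{D ⊆ C} pm C` satisfies the validity bound `m(D)·(|D|-2) ≤ |D|`. -/
structure SStruct (α : Type*) [DecidableEq α] where
  carrier : Set α
  pm : Finset α → ℕ
  pm_le : ∀ C, pm C ≤ 3
  pm_supp : ∀ C, pm C ≠ 0 → ↑C ⊆ carrier ∧ 3 ≤ C.card
  finite_meets : ∀ X : Finset α, {C : Finset α | pm C ≠ 0 ∧ 3 ≤ (C ∩ X).card}.Finite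
  valid : ∀ D : Finset α, 3 ≤ D.card →
    (∑ᶠ C ∈ {C : Finset α | D ⊆ C}, pm C) * (D.card - 2) ≤ D.card

/-- The S-predimension of a finite subset `X` of the ambient S-structure `N`:
`d₀ₛ(X) = |X| - Σ_C pm(C)·|C ∩ X|*` (the induced cliques on `X` are the `C ∩ X`). -/
noncomputable def d0s (N : SStruct α) (X : Finset α) : ℤ :=
  (X.card : ℤ) - ∑ᶠ C : Finset α, (N.pm C : ℤ) * cardStar (C ∩ X)

/-- A finite subset `A` is strong (self-sufficient) in `B`: `d₀ₛ(X/A) ≥ 0` for every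
finite `X ⊆ B`. -/
def FinStrongIn (N : SStruct α) (A : Finset α) (B : Set α) : Prop :=
  ↑A ⊆ B ∧ ∀ X : Finset α, ↑X ⊆ B → d0s N A ≤ d0s N (X ∪ A)

/-- `A ≤ₛ B` for arbitrary (possibly infinite) subsets `A ⊆ B` of the ambient
S-structure `N`: every finite `D ⊆ A` strong in `A` is strong in `B`. -/
def StrongIn (N : SStruct α) (A B : Set α) : Prop :=
  A ⊆ B ∧ ∀ D : Finset α, ↑D ⊆ A → FinStrongIn N D A → FinStrongIn N D B

/-- The associated multiplicity function: `m(X) = Σ_{X ⊆ C} pm C`. -/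
noncomputable def multFun (N : SStruct α) (X : Finset α) : ℕ :=
  ∑ᶠ C ∈ {C : Finset α | X ⊆ C}, N.pm C

/-!
Cardinality is modular, `|B₁ ∪ B₂| + |B₁ ∩ B₂| = |B₁| + |B₂|`, so only the clique terms of
`d₀ₛ` matter. For a fixed clique `C` the traces `X = C ∩ B₁`, `Y = C ∩ B₂` satisfy
`C ∩ (B₁ ∪ B₂) = X ∪ Y` and `C ∩ (B₁ ∩ B₂) = X ∩ Y`, and `n ↦ max 0 (n - 2)` is convex, so
`|X|* + |Y|* ≤ |X ∪ Y|* + |X ∩ Y|*`. This convexity defect vanishes when `X ∪ Y` has fewer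
than 3 points, when `X ∩ Y` has at least 3, or when one trace contains the other; the
splitting hypothesis on the cliques says that one of these always happens.
-/

theorem cardStar_add_cardStar_le (X Y : Finset α) :
    cardStar X + cardStar Y ≤ cardStar (X ∪ Y) + cardStar (X ∩ Y) := by
  have hcard := Finset.card_union_add_card_inter X Y
  have hX := Finset.card_le_card (Finset.inter_subset_left : X ∩ Y ⊆ X)
  have hY := Finset.card_le_card (Finset.inter_subset_right : X ∩ Y ⊆ Y)
  unfold cardStar
  omega

theorem cardStar_add_cardStar_eq_of_three_le_card_inter {X Y : Finset α}
    (h : 3 ≤ (X ∩ Y).card) :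
    cardStar X + cardStar Y = cardStar (X ∪ Y) + cardStar (X ∩ Y) := by
  have hcard := Finset.card_union_add_card_inter X Y
  have hX := Finset.card_le_card (Finset.inter_subset_left : X ∩ Y ⊆ X)
  have hY := Finset.card_le_card (Finset.inter_subset_right : X ∩ Y ⊆ Y)
  unfold cardStar
  omega

theorem cardStar_add_cardStar_eq_of_card_union_lt_three {X Y : Finset α}
    (h : (X ∪ Y).card < 3) :
    cardStar X + cardStar Y = cardStar (X ∪ Y) + cardStar (X ∩ Y) := by
  have hX := Finset.card_le_card (Finset.subset_union_left : X ⊆ X ∪ Y)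
  have hY := Finset.card_le_card (Finset.subset_union_right : Y ⊆ X ∪ Y)
  have hXY := Finset.card_le_card (Finset.inter_subset_union : X ∩ Y ⊆ X ∪ Y)
  unfold cardStar
  omega

theorem cardStar_add_cardStar_eq_of_subset {X Y : Finset α} (h : Y ⊆ X) :
    cardStar X + cardStar Y = cardStar (X ∪ Y) + cardStar (X ∩ Y) := by
  rw [Finset.union_eq_left.2 h, Finset.inter_eq_right.2 h]

theorem finite_support_pm_mul_cardStar (N : SStruct α) (X : Finset α) :
    (Function.support fun C => (N.pm C : ℤ) * cardStar (C ∩ X)).Finite := by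
  refine (N.finite_meets X).subset fun C hC => ?_
  obtain ⟨hpm, hstar⟩ := mul_ne_zero_iff.1 hC
  unfold cardStar at hstar
  exact ⟨Nat.cast_ne_zero.1 hpm, by omega⟩

theorem d0s_union_add_d0s_inter (N : SStruct α) (X Y : Finset α) :
    d0s N (X ∪ Y) + d0s N (X ∩ Y) = d0s N X + d0s N Y -
      ∑ᶠ C : Finset α, (N.pm C : ℤ) * (cardStar (C ∩ (X ∪ Y)) + cardStar (C ∩ (X ∩ Y)) -
        (cardStar (C ∩ X) + cardStar (C ∩ Y))) := by
  have hcard := Finset.card_union_add_card_inter X Y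
  have hfin := finite_support_pm_mul_cardStar N
  have hfin₂ (U V : Finset α) := ((hfin U).union (hfin V)).subset (Function.support_add _ _)
  simp only [d0s, mul_sub, mul_add]
  rw [finsum_sub_distrib (hfin₂ _ _) (hfin₂ _ _),
    finsum_add_distrib (hfin _) (hfin _), finsum_add_distrib (hfin _) (hfin _)]
  have hcardℤ : ((X ∪ Y).card : ℤ) + (X ∩ Y).card = X.card + Y.card := by exact_mod_cast hcard
  linarith

theorem cardStar_inter_union_add_cardStar_inter_inter_eq (C B1 B2 : Finset α)
    (hsplit : 3 ≤ (C ∩ (B1 ∪ B2)).card → (C ∩ (B1 ∩ B2)).card < 3 →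
      C ∩ (B1 ∪ B2) ⊆ B1 ∨ C ∩ (B1 ∪ B2) ⊆ B2) :
    cardStar (C ∩ (B1 ∪ B2)) + cardStar (C ∩ (B1 ∩ B2)) =
      cardStar (C ∩ B1) + cardStar (C ∩ B2) := by
  rw [Finset.inter_union_distrib_left, Finset.inter_inter_distrib_left] at hsplit ⊢
  symm
  by_cases hD : (C ∩ B1 ∪ C ∩ B2).card < 3
  · exact cardStar_add_cardStar_eq_of_card_union_lt_three hD
  by_cases hA : (C ∩ B1 ∩ (C ∩ B2)).card < 3
  · rcases hsplit (not_lt.1 hD) hA with h | h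
    · exact cardStar_add_cardStar_eq_of_subset
        (Finset.subset_inter Finset.inter_subset_left (Finset.subset_union_right.trans h))
    · rw [add_comm (cardStar (C ∩ B1)), Finset.union_comm (C ∩ B1), Finset.inter_comm (C ∩ B1)]
      exact cardStar_add_cardStar_eq_of_subset
        (Finset.subset_inter Finset.inter_subset_left (Finset.subset_union_left.trans h))
  · exact cardStar_add_cardStar_eq_of_three_le_card_inter (not_lt.1 hA)

theorem stmt5_general (N : SStruct α) (B1 B2 : Finset α) :
    (d0s N (B1 ∪ B2) - d0s N B1 ≤ d0s N B2 - d0s N (B1 ∩ B2)) ∧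
    ((∀ C : Finset α, N.pm C ≠ 0 → 3 ≤ (C ∩ (B1 ∪ B2)).card →
        (C ∩ (B1 ∩ B2)).card < 3 →
        C ∩ (B1 ∪ B2) ⊆ B1 ∨ C ∩ (B1 ∪ B2) ⊆ B2) →
      d0s N (B1 ∪ B2) - d0s N B1 = d0s N B2 - d0s N (B1 ∩ B2)) := by
  have hmod := d0s_union_add_d0s_inter N B1 B2
  refine ⟨?_, fun hsplit => ?_⟩
  · have hdefect := finsum_nonneg fun C => mul_nonneg (Nat.cast_nonneg (N.pm C))
      (sub_nonneg.2 (cardStar_add_cardStar_le (C ∩ B1) (C ∩ B2)))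
    simp only [← Finset.inter_union_distrib_left, ← Finset.inter_inter_distrib_left] at hdefect
    linarith
  · rw [finsum_eq_zero_of_forall_eq_zero fun C => ?_] at hmod
    · linarith
    by_cases hpm : N.pm C = 0
    · simp [hpm]
    rw [cardStar_inter_union_add_cardStar_inter_inter_eq C B1 B2 (hsplit C hpm), sub_self,
      mul_zero]

/-- submodularity of the S-predimension. For finite substructures
`B₁, B₂` of `N` with `A = B₁ ∩ B₂` and `D = B₁ ∪ B₂`: `d₀ₛ(B₂/A) ≥ d₀ₛ(B₂/B₁)`;
moreover, if every maximal clique of `D` not extending a clique of `A` lies entirely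
within `B₁` or within `B₂` (i.e. `C(D/A) = C(B₁/A) ∪ C(B₂/A)`), equality holds. -/
theorem stmt5 (N : SStruct α) (B1 B2 : Finset α)
    (h1 : ↑B1 ⊆ N.carrier) (h2 : ↑B2 ⊆ N.carrier) :
    (d0s N (B1 ∪ B2) - d0s N B1 ≤ d0s N B2 - d0s N (B1 ∩ B2)) ∧
    ((∀ C : Finset α, N.pm C ≠ 0 → 3 ≤ (C ∩ (B1 ∪ B2)).card →
        (C ∩ (B1 ∩ B2)).card < 3 →
        C ∩ (B1 ∪ B2) ⊆ B1 ∨ C ∩ (B1 ∪ B2) ⊆ B2) →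
      d0s N (B1 ∪ B2) - d0s N B1 = d0s N B2 - d0s N (B1 ∩ B2)) :=
  stmt5_general N B1 B2
end

section
/- If {Aᵢ}_{i∈I} is a family of substructures of an S-structure N with each Aᵢ ≤ₛ N, then ⋂_{i∈I} Aᵢ ≤ₛ N. Consequently, every subset A ⊆ N has a unique smallest superset cl(A) with cl(A) ≤ₛ N. -/
variable {α : Type*} [DecidableEq α] {β : Type*} [DecidableEq β]

/-!
`d₀ₛ` is submodular, `d₀ₛ(U ∪ V) + d₀ₛ(U ∩ V) ≤ d₀ₛ(U) + d₀ₛ(V)`, because `n ↦ max 0 (n - 2)` is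
convex. Fix a finite `D ⊆ ⋂ Aᵢ` strong in `⋂ Aᵢ`, and let `W ⊇ D` be a finite subset of `N`
minimising `d₀ₛ`, of least cardinality among the minimisers (it exists as `d₀ₛ` is bounded
below). If `Z ⊇ D` is strong in `N`, submodularity gives `d₀ₛ(W ∩ Z) ≤ d₀ₛ(W)`, so `W ⊆ Z`.
A `d₀ₛ`-minimiser over `D` inside `Aᵢ` is strong in `Aᵢ`, hence in `N`, so `W ⊆ ⋂ Aᵢ`; then
`d₀ₛ(D) ≤ d₀ₛ(W)` and `D` is strong in `N`. The closure of `B` is the intersection of all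
strong supersets of `B`.
-/

open Finset

lemma cardStar_inter_add_cardStar_inter_le (C U V : Finset α) :
    cardStar (C ∩ U) + cardStar (C ∩ V) ≤
      cardStar (C ∩ (U ∪ V)) + cardStar (C ∩ (U ∩ V)) := by
  have hcard : #(C ∩ U) + #(C ∩ V) = #(C ∩ (U ∪ V)) + #(C ∩ (U ∩ V)) := by
    rw [← card_union_add_card_inter, ← inter_union_distrib_left, ← inter_inter_distrib_left]
  have hU : #(C ∩ U) ≤ #(C ∩ (U ∪ V)) := card_le_card (inter_subset_inter_left subset_union_left)
  have hV : #(C ∩ V) ≤ #(C ∩ (U ∪ V)) := card_le_card (inter_subset_inter_left subset_union_right)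
  have hUV : #(C ∩ (U ∩ V)) ≤ #(C ∩ U) := card_le_card (inter_subset_inter_left inter_subset_left)
  unfold cardStar
  omega

section Predimension

variable (N : SStruct α)

/-- Only the finitely many cliques meeting `Y` in at least three points contribute to
`d₀ₛ(X)` for `X ⊆ Y`. -/
lemma d0s_eq_sum_of_subset {X Y : Finset α} (hXY : X ⊆ Y) :
    d0s N X = #X - ∑ C ∈ (N.finite_meets Y).toFinset, (N.pm C : ℤ) * cardStar (C ∩ X) := by
  rw [d0s, finsum_eq_sum_of_support_subset]
  intro C hC
  rw [Function.mem_support, mul_ne_zero_iff] at hC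
  have hthree : 3 ≤ #(C ∩ X) := by
    have := hC.2
    unfold cardStar at this
    omega
  rw [Set.Finite.coe_toFinset]
  exact ⟨by exact_mod_cast hC.1, hthree.trans (card_le_card (inter_subset_inter_left hXY))⟩

lemma d0s_union_add_d0s_inter_le (U V : Finset α) :
    d0s N (U ∪ V) + d0s N (U ∩ V) ≤ d0s N U + d0s N V := by
  rw [d0s_eq_sum_of_subset N (subset_refl (U ∪ V)),
    d0s_eq_sum_of_subset N (inter_subset_left.trans subset_union_left),
    d0s_eq_sum_of_subset N (subset_union_left (s₂ := V)),
    d0s_eq_sum_of_subset N (subset_union_right (s₁ := U))]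
  have hcard : (#(U ∪ V) : ℤ) + #(U ∩ V) = #U + #V := by
    exact_mod_cast card_union_add_card_inter U V
  have hsum := sum_le_sum fun C (_ : C ∈ (N.finite_meets (U ∪ V)).toFinset) =>
    mul_le_mul_of_nonneg_left (cardStar_inter_add_cardStar_inter_le C U V)
      (Int.natCast_nonneg (N.pm C))
  simp only [mul_add, sum_add_distrib] at hsum
  linarith

end Predimension

structure IsD0sMinimizer (N : SStruct α) (D : Finset α) (B : Set α) (W : Finset α) : Prop where
  subset : D ⊆ W
  coe_subset : ↑W ⊆ B
  d0s_le : ∀ ⦃Z : Finset α⦄, D ⊆ Z → ↑Z ⊆ B → d0s N W ≤ d0s N Z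
  card_le : ∀ ⦃Z : Finset α⦄, D ⊆ Z → ↑Z ⊆ B → d0s N Z ≤ d0s N W → #W ≤ #Z

namespace IsD0sMinimizer

variable {N : SStruct α} {D W Z : Finset α} {B : Set α}

lemma exists_of_bddBelow (hD : ↑D ⊆ B) (hbdd : BddBelow (d0s N '' {X : Finset α | ↑X ⊆ B})) :
    ∃ W, IsD0sMinimizer N D B W := by
  set S := {Z : Finset α | D ⊆ Z ∧ ↑Z ⊆ B}
  have hbddS : BddBelow (d0s N '' S) := hbdd.mono (Set.image_mono fun Z hZ => hZ.2)
  have hne : (d0s N '' S).Nonempty := ⟨_, D, ⟨subset_rfl, hD⟩, rfl⟩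
  obtain ⟨Z₀, hZ₀, hZ₀inf⟩ := Int.csInf_mem hne hbddS
  have hleast : ∀ Z ∈ S, d0s N Z₀ ≤ d0s N Z := fun Z hZ =>
    hZ₀inf ▸ csInf_le hbddS ⟨Z, hZ, rfl⟩
  obtain ⟨W, ⟨hWS, hWZ₀⟩, hWmin⟩ :=
    (measure card).wf.has_min {Z | Z ∈ S ∧ d0s N Z = d0s N Z₀} ⟨Z₀, hZ₀, rfl⟩
  refine ⟨W, ⟨hWS.1, hWS.2, fun Z h₁ h₂ => hWZ₀ ▸ hleast Z ⟨h₁, h₂⟩, fun Z h₁ h₂ h₃ => ?_⟩⟩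
  exact not_lt.mp (hWmin Z ⟨⟨h₁, h₂⟩, le_antisymm (hWZ₀ ▸ h₃) (hleast Z ⟨h₁, h₂⟩)⟩)

lemma finStrongIn (hW : IsD0sMinimizer N D B W) : FinStrongIn N W B :=
  ⟨hW.coe_subset, fun X hX => hW.d0s_le (hW.subset.trans subset_union_right)
    (coe_union X W ▸ Set.union_subset hX hW.coe_subset)⟩

lemma finStrongIn_of_d0s_le (hW : IsD0sMinimizer N D B W) (hD : ↑D ⊆ B)
    (h : d0s N D ≤ d0s N W) : FinStrongIn N D B :=
  ⟨hD, fun X hX => h.trans (hW.d0s_le subset_union_right (coe_union X D ▸ Set.union_subset hX hD))⟩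

lemma subset_of_finStrongIn (hW : IsD0sMinimizer N D B W) (hDZ : D ⊆ Z)
    (hZ : FinStrongIn N Z B) : W ⊆ Z := by
  have hsubmod := d0s_union_add_d0s_inter_le N W Z
  have hZW : d0s N Z ≤ d0s N (W ∪ Z) := hZ.2 W hW.coe_subset
  have hcard : #W ≤ #(W ∩ Z) :=
    hW.card_le (subset_inter hW.subset hDZ)
      ((Finset.coe_subset.mpr inter_subset_left).trans hW.coe_subset) (by linarith)
  exact inter_eq_left.mp (eq_of_subset_of_card_le inter_subset_left hcard)

end IsD0sMinimizer

section Strong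

variable {N : SStruct α}

theorem strongIn_iInter (hbdd : BddBelow (d0s N '' {X : Finset α | ↑X ⊆ N.carrier}))
    {I : Type*} [Nonempty I] {A : I → Set α} (hA : ∀ i, StrongIn N (A i) N.carrier) :
    StrongIn N (⋂ i, A i) N.carrier := by
  have hsub : (⋂ i, A i) ⊆ N.carrier :=
    (Set.iInter_subset A (Classical.arbitrary I)).trans (hA _).1
  refine ⟨hsub, fun D hD hDstrong => ?_⟩
  obtain ⟨W, hW⟩ := IsD0sMinimizer.exists_of_bddBelow (hD.trans hsub) hbdd
  have hWA : ∀ i, ↑W ⊆ A i := fun i => by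
    have hDA : ↑D ⊆ A i := hD.trans (Set.iInter_subset A i)
    obtain ⟨Z, hZ⟩ := IsD0sMinimizer.exists_of_bddBelow hDA
      (hbdd.mono (Set.image_mono fun X hX => hX.trans (hA i).1))
    have hZN : FinStrongIn N Z N.carrier := (hA i).2 Z hZ.coe_subset hZ.finStrongIn
    exact (coe_subset.mpr (hW.subset_of_finStrongIn hZ.subset hZN)).trans hZ.coe_subset
  have hDW : d0s N D ≤ d0s N W := by
    simpa [union_eq_left.mpr hW.subset] using hDstrong.2 W (Set.subset_iInter hWA)
  exact hW.finStrongIn_of_d0s_le (hD.trans hsub) hDW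

theorem isLeast_sInter_strongIn_supersets
    (hbdd : BddBelow (d0s N '' {X : Finset α | ↑X ⊆ N.carrier})) {B : Set α}
    (hB : B ⊆ N.carrier) :
    IsLeast {A | B ⊆ A ∧ StrongIn N A N.carrier} (⋂₀ {A | B ⊆ A ∧ StrongIn N A N.carrier}) := by
  set S := {A | B ⊆ A ∧ StrongIn N A N.carrier}
  have : Nonempty S := ⟨⟨N.carrier, hB, subset_rfl, fun _ _ h => h⟩⟩
  refine ⟨⟨Set.subset_sInter fun A hA => hA.1, ?_⟩, fun A hA => Set.sInter_subset_of_mem hA⟩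
  rw [Set.sInter_eq_iInter]
  exact strongIn_iInter hbdd fun A => A.2.2

end Strong

/-- an intersection of a (nonempty) family of strong substructures of `N`
is strong in `N`; consequently every subset `B` of `N` has a unique smallest strong
superset `cl(B) ≤ₛ N`. (We assume `d_s(∅, N)` exists, i.e. `d₀ₛ` is bounded below on
finite substructures of `N`.) -/
theorem stmt8 (N : SStruct α)
    (hBound : ∃ m : ℤ, ∀ X : Finset α, ↑X ⊆ N.carrier → m ≤ d0s N X)
    {I : Type*} [Nonempty I] (A : I → Set α)
    (hA : ∀ i, StrongIn N (A i) N.carrier) :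
    StrongIn N (⋂ i, A i) N.carrier ∧
    ∀ B : Set α, B ⊆ N.carrier →
      ∃! cl : Set α, B ⊆ cl ∧ StrongIn N cl N.carrier ∧
        ∀ B' : Set α, B ⊆ B' → StrongIn N B' N.carrier → cl ⊆ B' := by
  obtain ⟨m, hm⟩ := hBound
  have hbdd : BddBelow (d0s N '' {X : Finset α | ↑X ⊆ N.carrier}) :=
    ⟨m, Set.forall_mem_image.mpr fun X hX => hm X hX⟩
  refine ⟨strongIn_iInter hbdd hA, fun B hB => ?_⟩
  have hcl := isLeast_sInter_strongIn_supersets hbdd hB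
  refine ⟨_, ⟨hcl.1.1, hcl.1.2, fun B' h₁ h₂ => hcl.2 ⟨h₁, h₂⟩⟩, fun cl ⟨h₁, h₂, h₃⟩ => ?_⟩
  exact (hcl.unique ⟨⟨h₁, h₂⟩, fun B' hB' => h₃ B' hB'.1 hB'.2⟩).symm
end

section
/- In the graph-theoretic core of the previous lemma: let G = (V,E) be a connected graph on n ≥ 4 vertices, where each vertex is a 2-element subset of a ground set A, each edge {u,v} corresponds to the 3-element set u ∪ v (so adjacent vertices intersect), edges corresponding to the same 3-element set form either a single edge or a triangle ('strong triangle'), and each vertex is incident to edges representing at least 3 distinct 3-element sets that are each represented by at least one other incidence. If G consists of t strong triangles and s simple edges, then the set ⋃V ⊆ A satisfies |⋃V| < (number of distinct 3-element sets represented by edges), i.e. there is a subset of A whose number of elements is strictly less than the number of distinct triples attached to it. -/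
attribute [local instance] Classical.propDecidable

variable {α : Type*} [DecidableEq α]

/-!
Call a pair `(v, t)` an incidence when some edge at the vertex `v` represents the triple `t`.
Every vertex has at least three incidences, while a triple has at most two, or three if it is
strong; so `3 n ≤ 2 τ + σ`, where `τ` counts the triples and `σ` the strong ones.

On the other side, the vertices of `G` are the edges of a graph on `⋃ V`, and that graph is
connected because adjacent vertices of `G` meet. A connected graph has at most one point more
than it has edges, so `|⋃ V| ≤ n + 1`. A strong triple is a triangle of this graph, and
deleting one side of a triangle keeps it connected; so does deleting one side from each of two
distinct triangles, each chosen outside the other triangle. Hence `|⋃ V| + min σ 2 ≤ n + 1`,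
and for `n ≥ 4` the two inequalities give `|⋃ V| < τ`.
-/

open Finset

def PairAdj (E : Finset (Finset α)) (a b : α) : Prop := ({a, b} : Finset α) ∈ E

def PairConnected (E : Finset (Finset α)) : Prop :=
  ∀ x ∈ E.biUnion id, ∀ y ∈ E.biUnion id, Relation.ReflTransGen (PairAdj E) x y

def pairGraph (E : Finset (Finset α)) : SimpleGraph (E.biUnion id) :=
  SimpleGraph.fromRel fun x y => PairAdj E x y

lemma card_edgeSet_pairGraph_le (E : Finset (Finset α)) :
    Nat.card (pairGraph E).edgeSet ≤ #E := by
  have hmem : ∀ z ∈ (pairGraph E).edgeSet, (z.map Subtype.val).toFinset ∈ E := by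
    rintro ⟨x, y⟩ hxy
    rw [SimpleGraph.mem_edgeSet, pairGraph, SimpleGraph.fromRel_adj, PairAdj, PairAdj] at hxy
    rcases hxy.2 with h | h
    · simpa [Sym2.toFinset_mk_eq] using h
    · simpa [Sym2.toFinset_mk_eq, pair_comm] using h
  let f : (pairGraph E).edgeSet → E := fun z => ⟨_, hmem z.1 z.2⟩
  have hf : f.Injective := by
    intro z z' h
    have h' : (z.1.map Subtype.val).toFinset = (z'.1.map Subtype.val).toFinset :=
      congrArg Subtype.val h
    refine Subtype.ext (Sym2.map.injective Subtype.val_injective (Sym2.ext fun a => ?_))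
    rw [← Sym2.mem_toFinset, h', Sym2.mem_toFinset]
  simpa [Nat.card_eq_finsetCard] using Nat.card_le_card_of_injective f hf

lemma pairGraph_connected {E : Finset (Finset α)} (hE : PairConnected E)
    (hne : (E.biUnion id).Nonempty) : (pairGraph E).Connected := by
  have hreach : ∀ x : E.biUnion id, ∀ {y}, Relation.ReflTransGen (PairAdj E) x y →
      ∃ hy : y ∈ E.biUnion id, (pairGraph E).Reachable x ⟨y, hy⟩ := by
    intro x y hxy
    induction hxy with
    | refl => exact ⟨x.2, .rfl⟩
    | @tail b c _ hbc ih =>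
      obtain ⟨_, hxb⟩ := ih
      have hc : c ∈ E.biUnion id := mem_biUnion.2 ⟨_, hbc, by simp⟩
      refine ⟨hc, hxb.trans ?_⟩
      by_cases h : b = c
      · subst h; rfl
      · exact SimpleGraph.Adj.reachable <|
          (SimpleGraph.fromRel_adj _ _ _).2 ⟨fun h' => h (congrArg Subtype.val h'), .inl hbc⟩
  have := hne.to_subtype
  exact ⟨fun x y => (hreach x (hE x x.2 y y.2)).2⟩

lemma card_biUnion_le_card_add_one {E : Finset (Finset α)} (hE : PairConnected E) :
    #(E.biUnion id) ≤ #E + 1 := by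
  rcases (E.biUnion id).eq_empty_or_nonempty with h | h
  · simp [h]
  have := (pairGraph_connected hE h).card_vert_le_card_edgeSet_add_one
  rw [Nat.card_eq_finsetCard] at this
  linarith [card_edgeSet_pairGraph_le E]

lemma reflTransGen_pairAdj_of_mem {E : Finset (Finset α)} {e : Finset α} (he : e ∈ E)
    (he2 : #e = 2) {x y : α} (hx : x ∈ e) (hy : y ∈ e) :
    Relation.ReflTransGen (PairAdj E) x y := by
  by_cases hxy : x = y
  · rw [hxy]
  · have hpair : ({x, y} : Finset α) = e := eq_of_subset_of_card_le
      (insert_subset hx (singleton_subset_iff.2 hy)) (by rw [he2, card_pair hxy])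
    exact .single (by rw [PairAdj, hpair]; exact he)

lemma pairConnected_of_reflTransGen {E : Finset (Finset α)} {R : Finset α → Finset α → Prop}
    (h2 : ∀ e ∈ E, #e = 2) (hRE : ∀ u v, R u v → v ∈ E)
    (hR : ∀ u v, R u v → (u ∩ v).Nonempty)
    (hconn : ∀ u ∈ E, ∀ v ∈ E, Relation.ReflTransGen R u v) : PairConnected E := by
  intro x hx y hy
  obtain ⟨u, hu, hxu⟩ := mem_biUnion.1 hx
  obtain ⟨v, hv, hyv⟩ := mem_biUnion.1 hy
  have key : ∀ {w}, Relation.ReflTransGen R u w → ∀ y ∈ w,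
      Relation.ReflTransGen (PairAdj E) x y := by
    intro w huw
    induction huw with
    | refl => exact fun y hy => reflTransGen_pairAdj_of_mem hu (h2 u hu) hxu hy
    | @tail b c _ hbc ih =>
      obtain ⟨z, hz⟩ := hR b c hbc
      rw [mem_inter] at hz
      have hc := hRE b c hbc
      exact fun y hy => (ih z hz.1).trans (reflTransGen_pairAdj_of_mem hc (h2 c hc) hz.2 hy)
  exact key (hconn u hu v hv) y hyv

lemma PairConnected.sdiff {E S : Finset (Finset α)} (hE : PairConnected E)
    (hS : ∀ e ∈ S, ∃ c, ∀ x ∈ e, ({x, c} : Finset α) ∈ E \ S) :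
    (E \ S).biUnion id = E.biUnion id ∧ PairConnected (E \ S) := by
  have hcover : (E \ S).biUnion id = E.biUnion id := by
    refine subset_antisymm (biUnion_subset_biUnion_of_subset_left _ sdiff_subset) fun x hx => ?_
    obtain ⟨e, he, hxe⟩ := mem_biUnion.1 hx
    by_cases heS : e ∈ S
    · obtain ⟨c, hc⟩ := hS e heS
      exact mem_biUnion.2 ⟨_, hc x hxe, by simp⟩
    · exact mem_biUnion.2 ⟨e, mem_sdiff.2 ⟨he, heS⟩, hxe⟩
  refine ⟨hcover, fun x hx y hy => ?_⟩
  rw [hcover] at hx hy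
  refine Relation.ReflTransGen.lift' id (fun a b hab => ?_) _ _ (hE x hx y hy)
  by_cases habS : ({a, b} : Finset α) ∈ S
  · obtain ⟨c, hc⟩ := hS _ habS
    have hac : PairAdj (E \ S) a c := hc a (by simp)
    have hcb : PairAdj (E \ S) c b := by
      rw [PairAdj, pair_comm]
      exact hc b (by simp)
    exact .tail (.single hac) hcb
  · exact .single (mem_sdiff.2 ⟨hab, habS⟩)

lemma card_biUnion_add_card_le {E S : Finset (Finset α)} (hE : PairConnected E) (hSE : S ⊆ E)
    (hS : ∀ e ∈ S, ∃ c, ∀ x ∈ e, ({x, c} : Finset α) ∈ E \ S) :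
    #(E.biUnion id) + #S ≤ #E + 1 := by
  obtain ⟨hcover, hconn⟩ := hE.sdiff hS
  have := card_biUnion_le_card_add_one hconn
  rw [hcover, card_sdiff_of_subset hSE] at this
  have := card_le_card hSE
  omega

def IsTriangle (E : Finset (Finset α)) (t : Finset α) : Prop :=
  #t = 3 ∧ ∀ f ⊆ t, #f = 2 → f ∈ E

lemma IsTriangle.exists_apex {E S : Finset (Finset α)} {t e : Finset α} (ht : IsTriangle E t)
    (het : e ⊆ t) (he : #e = 2) (hS : ∀ s ∈ S, s ⊆ t → s = e) :
    ∃ c, ∀ x ∈ e, ({x, c} : Finset α) ∈ E \ S := by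
  obtain ⟨c, hc⟩ := card_eq_one.1 (by rw [card_sdiff_of_subset het, ht.1, he] : #(t \ e) = 1)
  have hct : c ∈ t \ e := hc ▸ mem_singleton_self c
  rw [mem_sdiff] at hct
  refine ⟨c, fun x hx => ?_⟩
  have hxct : {x, c} ⊆ t := insert_subset (het hx) (singleton_subset_iff.2 hct.1)
  have hxce : {x, c} ≠ e := fun h => hct.2 (h ▸ by simp)
  exact mem_sdiff.2 ⟨ht.2 _ hxct (card_pair (ne_of_mem_of_not_mem hx hct.2)),
    fun hxcS => hxce (hS _ hxcS hxct)⟩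

lemma IsTriangle.card_biUnion_le {E : Finset (Finset α)} {t : Finset α} (ht : IsTriangle E t)
    (hE : PairConnected E) : #(E.biUnion id) ≤ #E := by
  obtain ⟨e, -, het, he⟩ :=
    exists_subsuperset_card_eq (n := 2) (empty_subset t) (by simp) (by rw [ht.1]; norm_num)
  have := card_biUnion_add_card_le hE (singleton_subset_iff.2 (ht.2 e het he))
    fun s hs => by
      rw [mem_singleton.1 hs]
      exact ht.exists_apex het he fun _ hs' _ => mem_singleton.1 hs'
  rw [card_singleton] at this
  omega

lemma exists_side_not_subset {β : Type*} {t t' : Finset β} (ht : #t = 3) (ht' : #t' = 3)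
    (hne : t ≠ t') : ∃ e ⊆ t, #e = 2 ∧ ¬ e ⊆ t' := by
  obtain ⟨z, hzt, hzt'⟩ := not_subset.1 fun h => hne (eq_of_subset_of_card_le h (by omega))
  obtain ⟨e, hze, het, he⟩ :=
    exists_subsuperset_card_eq (singleton_subset_iff.2 hzt) (by simp) (by omega : 2 ≤ #t)
  exact ⟨e, het, he, fun h => hzt' (h (hze (mem_singleton_self z)))⟩

lemma IsTriangle.card_biUnion_add_one_le {E : Finset (Finset α)} {t t' : Finset α}
    (ht : IsTriangle E t) (ht' : IsTriangle E t') (hne : t ≠ t') (hE : PairConnected E) :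
    #(E.biUnion id) + 1 ≤ #E := by
  obtain ⟨e, het, he, het'⟩ := exists_side_not_subset ht.1 ht'.1 hne
  obtain ⟨e', he't', he', he't⟩ := exists_side_not_subset ht'.1 ht.1 hne.symm
  have hee' : e ≠ e' := fun h => he't (h ▸ het)
  have := card_biUnion_add_card_le hE
    (insert_subset (ht.2 e het he) (singleton_subset_iff.2 (ht'.2 e' he't' he'))) fun s hs => by
      rcases mem_insert.1 hs with rfl | hs
      · refine ht.exists_apex het he fun s hs hst => ?_
        rcases mem_insert.1 hs with rfl | hs
        · rfl
        · exact absurd (mem_singleton.1 hs ▸ hst) he't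
      · rw [mem_singleton.1 hs]
        refine ht'.exists_apex he't' he' fun s hs hst => ?_
        rcases mem_insert.1 hs with rfl | hs
        · exact absurd hst het'
        · exact mem_singleton.1 hs
  rw [card_pair hee'] at this
  omega

/-- Triangles may share sides, so deleting one side from each of more than two of them can
disconnect the graph: the four triangles of `K₄` span only three independent cycles. -/
lemma card_biUnion_add_min_le {E F : Finset (Finset α)} (hE : PairConnected E)
    (hF : ∀ t ∈ F, IsTriangle E t) : #(E.biUnion id) + min #F 2 ≤ #E + 1 := by
  rcases Nat.lt_or_ge #F 2 with h | h
  · rcases F.eq_empty_or_nonempty with rfl | ⟨t, ht⟩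
    · simpa using card_biUnion_le_card_add_one hE
    · have := (hF t ht).card_biUnion_le hE
      omega
  · obtain ⟨t, ht, t', ht', hne⟩ := one_lt_card.1 h
    have := (hF t ht).card_biUnion_add_one_le (hF t' ht') hne hE
    omega

def IsStrongTriple (Adj : Finset α → Finset α → Prop) (t : Finset α) : Prop :=
  ∀ a b : Finset α, a ⊆ t → b ⊆ t → #a = 2 → #b = 2 → a ≠ b → Adj a b

lemma IsStrongTriple.isTriangle {β : Type*} {V : Finset (Finset β)}
    {Adj : Finset β → Finset β → Prop} (hAdjV : ∀ u v, Adj u v → u ∈ V) {t : Finset β}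
    (ht : #t = 3) (hs : IsStrongTriple Adj t) : IsTriangle V t := by
  refine ⟨ht, fun f hft hf => ?_⟩
  obtain ⟨g, hg, hgf⟩ := exists_mem_ne (s := t.powersetCard 2) (by simp [ht]) f
  rw [mem_powersetCard] at hg
  exact hAdjV _ _ (hs f g hft hg.1 hf hg.2 hgf.symm)

noncomputable def triples (V : Finset (Finset α)) (Adj : Finset α → Finset α → Prop) :
    Finset (Finset α) :=
  ((V ×ˢ V).filter (fun p => Adj p.1 p.2)).image (fun p => p.1 ∪ p.2)

def IsIncident (Adj : Finset α → Finset α → Prop) (v t : Finset α) : Prop :=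
  ∃ u, Adj v u ∧ u ∪ v = t

lemma card_image_union_le_card_bipartiteAbove {V : Finset (Finset α)}
    {Adj : Finset α → Finset α → Prop} (hAdjV : ∀ u v, Adj u v → u ∈ V ∧ v ∈ V)
    (v : Finset α) :
    #((V.filter (fun u => Adj v u)).image (fun u => u ∪ v)) ≤
      #((triples V Adj).bipartiteAbove (IsIncident Adj) v) := by
  refine card_le_card fun t ht => ?_
  obtain ⟨u, hu, rfl⟩ := mem_image.1 ht
  have hvu : Adj v u := (mem_filter.1 hu).2
  refine mem_bipartiteAbove _ |>.2 ⟨?_, u, hvu, rfl⟩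
  rw [union_comm]
  exact mem_image.2 ⟨(v, u), mem_filter.2 ⟨mem_product.2 (hAdjV v u hvu), hvu⟩, rfl⟩

lemma card_bipartiteBelow_isIncident_le {V : Finset (Finset α)}
    {Adj : Finset α → Finset α → Prop} (hv2 : ∀ v ∈ V, #v = 2)
    (hinter : ∀ u v, Adj u v → #(u ∪ v) = 3)
    (htri : ∀ u v u' v', Adj u v → Adj u' v' → u ∪ v = u' ∪ v' →
      ({u, v} : Finset (Finset α)) = {u', v'} ∨ IsStrongTriple Adj (u ∪ v))
    {t : Finset α} (ht : t ∈ triples V Adj) :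
    #(V.bipartiteBelow (IsIncident Adj) t) ≤ 2 + if IsStrongTriple Adj t then 1 else 0 := by
  obtain ⟨⟨a, b⟩, hab, rfl⟩ := mem_image.1 ht
  have hab : Adj a b := (mem_filter.1 hab).2
  split_ifs with hs
  · calc _ ≤ #((a ∪ b).powersetCard 2) := card_le_card fun v hv => ?_
      _ = 3 := by simp [hinter a b hab]
    obtain ⟨hv, u, -, huv⟩ := mem_bipartiteBelow _ |>.1 hv
    exact mem_powersetCard.2 ⟨huv ▸ subset_union_right, hv2 v hv⟩
  · calc _ ≤ #({a, b} : Finset (Finset α)) := card_le_card fun v hv => ?_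
      _ ≤ 2 := card_le_two
    obtain ⟨-, u, hvu, huv⟩ := mem_bipartiteBelow _ |>.1 hv
    rcases htri v u a b hvu hab (by rw [union_comm, huv]) with h | h
    · exact h ▸ mem_insert_self v {u}
    · rw [union_comm, huv] at h
      exact absurd h hs

lemma three_mul_card_le_card_triples {V : Finset (Finset α)}
    {Adj : Finset α → Finset α → Prop}
    (hv2 : ∀ v ∈ V, #v = 2) (hAdjV : ∀ u v, Adj u v → u ∈ V ∧ v ∈ V)
    (hinter : ∀ u v, Adj u v → #(u ∪ v) = 3)
    (htri : ∀ u v u' v', Adj u v → Adj u' v' → u ∪ v = u' ∪ v' →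
      ({u, v} : Finset (Finset α)) = {u', v'} ∨ IsStrongTriple Adj (u ∪ v))
    (hdeg : ∀ v ∈ V, 3 ≤ #((V.filter (fun u => Adj v u)).image (fun u => u ∪ v))) :
    3 * #V ≤ 2 * #(triples V Adj) + #((triples V Adj).filter (IsStrongTriple Adj)) := by
  calc 3 * #V = ∑ _v ∈ V, 3 := by rw [sum_const, smul_eq_mul, mul_comm]
    _ ≤ ∑ v ∈ V, #((triples V Adj).bipartiteAbove (IsIncident Adj) v) :=
      sum_le_sum fun v hv =>
        (hdeg v hv).trans (card_image_union_le_card_bipartiteAbove hAdjV v)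
    _ = ∑ t ∈ triples V Adj, #(V.bipartiteBelow (IsIncident Adj) t) :=
      sum_card_bipartiteAbove_eq_sum_card_bipartiteBelow _
    _ ≤ ∑ t ∈ triples V Adj, (2 + if IsStrongTriple Adj t then 1 else 0) :=
      sum_le_sum fun t ht => card_bipartiteBelow_isIncident_le hv2 hinter htri ht
    _ = _ := by
      rw [sum_add_distrib, sum_const, smul_eq_mul, mul_comm, sum_boole]
      rfl

theorem stmt11_general (V : Finset (Finset α)) (Adj : Finset α → Finset α → Prop)
    (hn : 4 ≤ V.card)
    (hv2 : ∀ v ∈ V, v.card = 2)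
    (hAdjV : ∀ u v, Adj u v → u ∈ V ∧ v ∈ V)
    (hinter : ∀ u v, Adj u v → (u ∪ v).card = 3)
    (hconn : ∀ u ∈ V, ∀ v ∈ V, Relation.ReflTransGen Adj u v)
    (htri : ∀ u v u' v', Adj u v → Adj u' v' → u ∪ v = u' ∪ v' →
      ({u, v} : Finset (Finset α)) = {u', v'} ∨
      (∀ a b : Finset α, a ⊆ u ∪ v → b ⊆ u ∪ v → a.card = 2 → b.card = 2 → a ≠ b →
        Adj a b))
    (hdeg : ∀ v ∈ V, 3 ≤ ((V.filter (fun u => Adj v u)).image (fun u => u ∪ v)).card) :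
    (V.biUnion id).card <
      (((V ×ˢ V).filter (fun p => Adj p.1 p.2)).image (fun p => p.1 ∪ p.2)).card := by
  have hmeet : ∀ u v, Adj u v → (u ∩ v).Nonempty := fun u v h => by
    have := card_union_add_card_inter u v
    rw [hinter u v h, hv2 u (hAdjV u v h).1, hv2 v (hAdjV u v h).2] at this
    exact card_pos.1 (by omega)
  have hpair : PairConnected V :=
    pairConnected_of_reflTransGen hv2 (fun u v h => (hAdjV u v h).2) hmeet hconn
  have hstrong : ∀ t ∈ (triples V Adj).filter (IsStrongTriple Adj), IsTriangle V t := by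
    intro t ht
    obtain ⟨ht, hs⟩ := mem_filter.1 ht
    obtain ⟨p, hp, rfl⟩ := mem_image.1 ht
    exact hs.isTriangle (fun u v h => (hAdjV u v h).1) (hinter _ _ (mem_filter.1 hp).2)
  have hcover := card_biUnion_add_min_le hpair hstrong
  have hincidences := three_mul_card_le_card_triples hv2 hAdjV hinter htri hdeg
  have := card_filter_le (triples V Adj) (IsStrongTriple Adj)
  change _ < #(triples V Adj)
  omega

/-- graph-theoretic core: let `G = (V, Adj)` be a connected graph on
`n ≥ 4` vertices, each vertex a 2-element subset of a ground set, adjacent vertices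
having a 3-element union; edges representing the same 3-element set form a single edge
or a strong triangle; and each vertex is incident to edges representing at least 3
distinct 3-element sets. Then `|⋃V|` is strictly smaller than the number of distinct
3-element sets represented by the edges. -/
theorem stmt11 (V : Finset (Finset α)) (Adj : Finset α → Finset α → Prop)
    (hn : 4 ≤ V.card)
    (hv2 : ∀ v ∈ V, v.card = 2)
    (hAdjV : ∀ u v, Adj u v → u ∈ V ∧ v ∈ V)
    (hsymm : ∀ u v, Adj u v → Adj v u)
    (hirr : ∀ v, ¬ Adj v v)
    (hinter : ∀ u v, Adj u v → (u ∪ v).card = 3)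
    (hconn : ∀ u ∈ V, ∀ v ∈ V, Relation.ReflTransGen Adj u v)
    (htri : ∀ u v u' v', Adj u v → Adj u' v' → u ∪ v = u' ∪ v' →
      ({u, v} : Finset (Finset α)) = {u', v'} ∨
      (∀ a b : Finset α, a ⊆ u ∪ v → b ⊆ u ∪ v → a.card = 2 → b.card = 2 → a ≠ b →
        Adj a b))
    (hdeg : ∀ v ∈ V, 3 ≤ ((V.filter (fun u => Adj v u)).image (fun u => u ∪ v)).card) :
    (V.biUnion id).card <
      (((V ×ˢ V).filter (fun p => Adj p.1 p.2)).image (fun p => p.1 ∪ p.2)).card :=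
  stmt11_general V Adj hn hv2 hAdjV hinter hconn htri hdeg
end

section
/- Let A ⊆ N be R-structures and C the universe of a clique with witnesses wit(C) = {x,y}, such that |(C ∪ {x,y}) ∩ A| ≥ 2. Then for any D ⊆ C, d₀({x,y} ∪ D / A) ≤ 0. If moreover A ≤ N (A is self-sufficient in N), then A ∪ {x,y} ∪ D ≤ N. -/
/-!
Put `A' = A ∪ {x, y} ∪ D`. Every `c ∈ C` forms the relation triple `{c, x, y}`, and such a
triple is new in `A'` exactly when `c` or one of `x, y` lies outside `A`. If `x, y ∈ A`, each new
point of `D` brings its own new triple. Otherwise every `c ∈ D ∪ (C ∩ A)` does, and the at most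
two new points among `x, y` are paid for by `C ∩ A`, because `(C ∪ {x, y}) ∩ A` has at least two
elements. Hence `r` grows at least as fast as the cardinality. Self-sufficiency of `A'` then
follows, since any extension of `A'` inside `N` is an extension of `A`.
-/

variable {α : Type*} [DecidableEq α]

open Finset

def IsRTriple (R : α → α → α → Prop) (s : Finset α) : Prop :=
  ∃ a b c : α, a ≠ b ∧ a ≠ c ∧ b ≠ c ∧ s = {a, b, c} ∧ R a b c

def IsSelfSufficient (R : α → α → α → Prop) (A : Finset α) (N : Set α) : Prop :=
  ∀ Y : Finset α, ↑Y ⊆ N → d0 R A ≤ d0 R (Y ∪ A)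

section Counting

variable (R : α → α → α → Prop)

open scoped Classical in
lemma rCount_eq_card_filter (X : Finset α) :
    rCount R X = #{s ∈ X.powerset | IsRTriple R s} := by
  rw [rCount, ← Set.ncard_coe_finset]
  congr 1
  ext s
  simp [IsRTriple]

lemma rCount_add_card_le {A A' : Finset α} (hAA' : A ⊆ A') (T : Finset (Finset α))
    (hT : ∀ s ∈ T, s ⊆ A' ∧ ¬ s ⊆ A ∧ IsRTriple R s) :
    rCount R A + #T ≤ rCount R A' := by
  classical
  rw [rCount_eq_card_filter, rCount_eq_card_filter]
  have hdisj : Disjoint {s ∈ A.powerset | IsRTriple R s} T :=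
    disjoint_right.mpr fun s hs hsA => (hT s hs).2.1 (mem_powerset.mp (mem_filter.mp hsA).1)
  rw [← card_union_of_disjoint hdisj]
  refine card_le_card (union_subset ?_ ?_)
  · exact filter_subset_filter _ (powerset_mono.mpr hAA')
  · intro s hs
    obtain ⟨hsA', -, hsR⟩ := hT s hs
    exact mem_filter.mpr ⟨mem_powerset.mpr hsA', hsR⟩

lemma rCount_add_card_witnessed_le {A A' : Finset α} (hAA' : A ⊆ A') {x y : α}
    (hxA' : x ∈ A') (hyA' : y ∈ A') (hxy : x ≠ y) {W : Finset α} (hWA' : W ⊆ A')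
    (hxW : x ∉ W) (hyW : y ∉ W) (hWR : ∀ c ∈ W, R c x y)
    (hWnew : ∀ c ∈ W, ¬ ({c, x, y} : Finset α) ⊆ A) :
    rCount R A + #W ≤ rCount R A' := by
  have hne : ∀ c ∈ W, c ≠ x ∧ c ≠ y := fun c hc =>
    ⟨fun h => hxW (h ▸ hc), fun h => hyW (h ▸ hc)⟩
  have hinj : Set.InjOn (fun c => ({c, x, y} : Finset α)) W := by
    intro c hc c' hc' h
    have hc_mem : c ∈ ({c', x, y} : Finset α) := by
      rw [← show ({c, x, y} : Finset α) = {c', x, y} from h]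
      exact mem_insert_self c {x, y}
    simpa [(hne c hc).1, (hne c hc).2] using hc_mem
  rw [← card_image_of_injOn hinj]
  refine rCount_add_card_le R hAA' _ fun s hs => ?_
  obtain ⟨c, hc, rfl⟩ := mem_image.mp hs
  refine ⟨insert_subset (hWA' hc) (insert_subset hxA' (singleton_subset_iff.mpr hyA')),
    hWnew c hc, c, x, y, (hne c hc).1, (hne c hc).2, hxy, rfl, hWR c hc⟩

lemma d0_sub_nonpos_of_card_sdiff_le {A A' : Finset α} (hAA' : A ⊆ A')
    (h : #(A' \ A) + rCount R A ≤ rCount R A') : d0 R A' - d0 R A ≤ 0 := by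
  have := card_sdiff_add_card_eq_card hAA'
  simp only [d0]
  omega

end Counting

lemma card_sdiff_add_card_union_inter_le (P C A : Finset α) :
    #(P \ A) + #((C ∪ P) ∩ A) ≤ #P + #(C ∩ A) := by
  have hsplit := card_sdiff_add_card_inter P A
  have hunion : #((C ∪ P) ∩ A) ≤ #(C ∩ A) + #(P ∩ A) :=
    union_inter_distrib_right C P A ▸ card_union_le _ _
  omega

theorem d0_union_witnesses_sub_nonpos (R : α → α → α → Prop) (A C : Finset α) {x y : α}
    (hxy : x ≠ y) (hx : x ∉ C) (hy : y ∉ C) (hw : ∀ c ∈ C, R c x y)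
    (hint : 2 ≤ #((C ∪ {x, y}) ∩ A)) {D : Finset α} (hD : D ⊆ C) :
    d0 R (A ∪ {x, y} ∪ D) - d0 R A ≤ 0 := by
  set A' := A ∪ {x, y} ∪ D
  have hAA' : A ⊆ A' := subset_union_left.trans subset_union_left
  have hxyA' : {x, y} ⊆ A' := subset_union_right.trans subset_union_left
  have hDA' : D ⊆ A' := subset_union_right
  have hxA' : x ∈ A' := hxyA' (mem_insert_self x {y})
  have hyA' : y ∈ A' := hxyA' (mem_insert_of_mem (mem_singleton_self y))
  have hnew : #(A' \ A) ≤ #({x, y} \ A) + #(D \ A) := by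
    refine (card_le_card fun a ha => ?_).trans (card_union_le _ _)
    simp only [A', mem_sdiff, mem_union] at ha ⊢
    tauto
  have hDx : x ∉ D \ A := fun h => hx (hD (mem_sdiff.mp h).1)
  have hDy : y ∉ D \ A := fun h => hy (hD (mem_sdiff.mp h).1)
  have hDR : ∀ c ∈ D \ A, R c x y := fun c hc => hw c (hD (mem_sdiff.mp hc).1)
  apply d0_sub_nonpos_of_card_sdiff_le R hAA'
  by_cases hxyA : {x, y} ⊆ A
  · have hgain := rCount_add_card_witnessed_le R hAA' hxA' hyA' hxy
      (sdiff_subset.trans hDA') hDx hDy hDR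
      fun c hc hcA => (mem_sdiff.mp hc).2 (hcA (mem_insert_self c _))
    rw [sdiff_eq_empty_iff_subset.mpr hxyA, card_empty] at hnew
    omega
  · -- every triple `{c, x, y}` is new, so all of `C ∩ A` counts as well
    have hdisj : Disjoint (D \ A) (C ∩ A) :=
      disjoint_left.mpr fun c hcD hcCA => (mem_sdiff.mp hcD).2 (mem_inter.mp hcCA).2
    have hgain := rCount_add_card_witnessed_le R hAA' hxA' hyA' hxy
      (W := D \ A ∪ C ∩ A)
      (union_subset (sdiff_subset.trans hDA') (inter_subset_right.trans hAA'))
      (notMem_union.mpr ⟨hDx, fun h => hx (mem_inter.mp h).1⟩)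
      (notMem_union.mpr ⟨hDy, fun h => hy (mem_inter.mp h).1⟩)
      (fun c hc => (mem_union.mp hc).elim (hDR c) fun h => hw c (mem_inter.mp h).1)
      fun c _ hcA => hxyA ((subset_insert c _).trans hcA)
    rw [card_union_of_disjoint hdisj] at hgain
    have hpair := card_sdiff_add_card_union_inter_le {x, y} C A
    have htwo : #({x, y} : Finset α) ≤ 2 := card_le_two
    omega

lemma IsSelfSufficient.union_of_d0_le {R : α → α → α → Prop} {A E : Finset α} {N : Set α}
    (hA : IsSelfSufficient R A N) (hEN : ↑E ⊆ N) (hle : d0 R (A ∪ E) ≤ d0 R A) :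
    IsSelfSufficient R (A ∪ E) N := by
  intro Y hYN
  have hext := hA (Y ∪ E) (by rw [coe_union]; exact Set.union_subset hYN hEN)
  rw [union_assoc, union_comm E A] at hext
  exact hle.trans hext

theorem stmt14_general (R : α → α → α → Prop)
    (N : Set α) (A : Finset α)
    (C : Finset α) (hCN : ↑C ⊆ N)
    (x y : α) (hxN : x ∈ N) (hyN : y ∈ N)
    (hxy : x ≠ y) (hx : x ∉ C) (hy : y ∉ C)
    (hw : ∀ c ∈ C, R c x y)
    (hint : 2 ≤ ((C ∪ {x, y}) ∩ A).card)
    (D : Finset α) (hD : D ⊆ C) :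
    d0 R (A ∪ {x, y} ∪ D) - d0 R A ≤ 0 ∧
    ((∀ Y : Finset α, ↑Y ⊆ N → d0 R A ≤ d0 R (Y ∪ A)) →
      ∀ Y : Finset α, ↑Y ⊆ N →
        d0 R (A ∪ {x, y} ∪ D) ≤ d0 R (Y ∪ (A ∪ {x, y} ∪ D))) := by
  have hd0 := d0_union_witnesses_sub_nonpos R A C hxy hx hy hw hint hD
  refine ⟨hd0, fun hA => ?_⟩
  have hEN : ↑({x, y} ∪ D) ⊆ N := by
    simp only [coe_union, coe_insert, coe_singleton]
    exact Set.union_subset (Set.insert_subset hxN (Set.singleton_subset_iff.mpr hyN))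
      ((coe_subset.mpr hD).trans hCN)
  rw [union_assoc] at hd0 ⊢
  exact IsSelfSufficient.union_of_d0_le hA hEN (by linarith)

/-- let `A ⊆ N` and let `C ⊆ N` be the universe of a clique witnessed by
`{x,y} ⊆ N`, with `|(C ∪ {x,y}) ∩ A| ≥ 2`. Then for every `D ⊆ C`,
`d₀({x,y} ∪ D / A) ≤ 0`; moreover if `A ≤ N` then `A ∪ {x,y} ∪ D ≤ N`. -/
theorem stmt14 (R : α → α → α → Prop) (hR : SymIrr R)
    (N : Set α) (A : Finset α) (hAN : ↑A ⊆ N)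
    (C : Finset α) (hCN : ↑C ⊆ N)
    (x y : α) (hxN : x ∈ N) (hyN : y ∈ N)
    (hxy : x ≠ y) (hx : x ∉ C) (hy : y ∉ C)
    (hw : ∀ c ∈ C, R c x y)
    (hint : 2 ≤ ((C ∪ {x, y}) ∩ A).card)
    (D : Finset α) (hD : D ⊆ C) :
    d0 R (A ∪ {x, y} ∪ D) - d0 R A ≤ 0 ∧
    ((∀ Y : Finset α, ↑Y ⊆ N → d0 R A ≤ d0 R (Y ∪ A)) →
      ∀ Y : Finset α, ↑Y ⊆ N →
        d0 R (A ∪ {x, y} ∪ D) ≤ d0 R (Y ∪ (A ∪ {x, y} ∪ D))) :=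
  stmt14_general R N A C hCN x y hxN hyN hxy hx hy hw hint D hD
end

section
/- For A ⊆ N S-structures and b ∈ N \ A, the relative predimension satisfies d₀ₛ(b/A) = 1 − Clq(b, A ∪ {b}), where Clq(b, A ∪ {b}) counts (with multiplicity) the maximal cliques of A ∪ {b} containing b. -/
variable {α : Type*} [DecidableEq α] {β : Type*} [DecidableEq β]

/-- `Clq(b, X)`: the number, counted with multiplicity, of maximal cliques of the
induced structure on `X` containing `b` (i.e. the sets `C ∩ X` of size `≥ 3`
containing `b`, for ambient cliques `C`). -/
noncomputable def Clq (N : SStruct α) (b : α) (X : Finset α) : ℕ :=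
  ∑ᶠ C ∈ {C : Finset α | b ∈ C ∧ 3 ≤ (C ∩ X).card}, N.pm C

/-!
Since `b ∉ A`, adding `b` raises `|X|` by one, and for every clique `C` the term `|C ∩ X|*`
grows by one exactly when `b ∈ C` and `|C ∩ (A ∪ {b})| ≥ 3`, and is unchanged otherwise.
Summing with weights `pm C` over the finitely many relevant cliques, the clique sum grows by
exactly `Clq(b, A ∪ {b})`.
-/

theorem cardStar_insert {s : Finset α} {b : α} (hb : b ∉ s) :
    cardStar (insert b s) = cardStar s + if 3 ≤ (insert b s).card then 1 else 0 := by
  rw [cardStar, cardStar, Finset.card_insert_of_notMem hb]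
  split_ifs <;> omega

theorem cardStar_inter_insert_sub {C s : Finset α} {b : α} (hb : b ∉ s) :
    cardStar (C ∩ insert b s) - cardStar (C ∩ s) =
      if b ∈ C ∧ 3 ≤ (C ∩ insert b s).card then 1 else 0 := by
  by_cases hbC : b ∈ C
  · have hbCs : b ∉ C ∩ s := fun h => hb (Finset.mem_inter.1 h).2
    rw [Finset.inter_insert_of_mem hbC, cardStar_insert hbCs]
    simp [hbC]
  · simp [Finset.inter_insert_of_notMem hbC, hbC]

theorem SStruct.hasFiniteSupport_pm_mul_cardStar (N : SStruct α) (X : Finset α) :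
    Function.HasFiniteSupport fun C => (N.pm C : ℤ) * cardStar (C ∩ X) := by
  refine (N.finite_meets X).subset fun C hC => ?_
  simp only [Function.mem_support, ne_eq, mul_eq_zero, Nat.cast_eq_zero, not_or] at hC
  refine ⟨hC.1, ?_⟩
  by_contra h
  exact hC.2 (by unfold cardStar; omega)

theorem d0s_insert_sub_d0s (N : SStruct α) {A : Finset α} {b : α} (hb : b ∉ A) :
    d0s N (insert b A) - d0s N A =
      1 - ∑ᶠ C, if b ∈ C ∧ 3 ≤ (C ∩ insert b A).card then (N.pm C : ℤ) else 0 := by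
  have hsum : (∑ᶠ C : Finset α, (N.pm C : ℤ) * cardStar (C ∩ insert b A)) -
      ∑ᶠ C : Finset α, (N.pm C : ℤ) * cardStar (C ∩ A) =
      ∑ᶠ C, if b ∈ C ∧ 3 ≤ (C ∩ insert b A).card then (N.pm C : ℤ) else 0 := by
    rw [← finsum_sub_distrib (N.hasFiniteSupport_pm_mul_cardStar _)
      (N.hasFiniteSupport_pm_mul_cardStar _)]
    refine finsum_congr fun C => ?_
    rw [← mul_sub, cardStar_inter_insert_sub hb]
    simp
  rw [d0s, d0s, Finset.card_insert_of_notMem hb, ← hsum]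
  push_cast
  ring

theorem cast_Clq (N : SStruct α) (b : α) (X : Finset α) :
    (Clq N b X : ℤ) = ∑ᶠ C, if b ∈ C ∧ 3 ≤ (C ∩ X).card then (N.pm C : ℤ) else 0 := by
  rw [Clq, finsum_mem_def, ← Nat.coe_castAddMonoidHom,
    AddMonoidHom.map_finsum_of_injective _ Nat.cast_injective]
  simp [Set.indicator_apply]

theorem stmt15_general (N : SStruct α) (A : Finset α) (b : α)
    (hbA : b ∉ A) :
    d0s N (insert b A) - d0s N A = 1 - (Clq N b (insert b A) : ℤ) := by
  rw [d0s_insert_sub_d0s N hbA, cast_Clq]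

/-- for `A ⊆ N` and `b ∈ N \ A`,
`d₀ₛ(b/A) = 1 - Clq(b, A ∪ {b})`. -/
theorem stmt15 (N : SStruct α) (A : Finset α) (b : α)
    (hA : ↑A ⊆ N.carrier) (hb : b ∈ N.carrier) (hbA : b ∉ A) :
    d0s N (insert b A) - d0s N A = 1 - (Clq N b (insert b A) : ℤ) :=
  stmt15_general N A b hbA
end

section
/- In a pregeometry with dimension d arising from a submodular predimension: if A is d-closed in B (every b ∈ B depending on A lies in A), then d(A,B) = d₀(A); that is, A is self-sufficient in B and its dimension equals its predimension. -/
/-! Take a finite `D ⊇ A` with `d₀(D) = d(A)`. Each `b ∈ D` gives `A ⊆ A ∪ {b} ⊆ D`, so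
`d(A ∪ {b})` is squeezed between `d(A)` and `d₀(D) = d(A)`: `b` depends on `A`, hence
`b ∈ A` by closedness, and `D = A`. -/

variable {α : Type*} [DecidableEq α]

section Dimension

variable {β : Type*} {d0 d : Finset β → ℤ}

theorem dim_le_predim_of_subset
    (hd : ∀ X : Finset β, IsLeast {n : ℤ | ∃ D : Finset β, X ⊆ D ∧ n = d0 D} (d X))
    {X D : Finset β} (hXD : X ⊆ D) : d X ≤ d0 D :=
  (hd X).2 ⟨D, hXD, rfl⟩

theorem dim_mono
    (hd : ∀ X : Finset β, IsLeast {n : ℤ | ∃ D : Finset β, X ⊆ D ∧ n = d0 D} (d X))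
    {X Y : Finset β} (hXY : X ⊆ Y) : d X ≤ d Y := by
  obtain ⟨D, hYD, hdY⟩ := (hd Y).1
  rw [hdY]
  exact dim_le_predim_of_subset hd (hXY.trans hYD)

theorem dim_insert_eq_of_mem_of_dim_eq [DecidableEq β]
    (hd : ∀ X : Finset β, IsLeast {n : ℤ | ∃ D : Finset β, X ⊆ D ∧ n = d0 D} (d X))
    {A D : Finset β} (hAD : A ⊆ D) (hdA : d A = d0 D) {b : β} (hb : b ∈ D) :
    d (insert b A) = d A :=
  le_antisymm (hdA ▸ dim_le_predim_of_subset hd (Finset.insert_subset hb hAD))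
    (dim_mono hd (Finset.subset_insert b A))

end Dimension

theorem stmt19_general (d0 : Finset α → ℤ)
    (d : Finset α → ℤ)
    (hd : ∀ X : Finset α,
      IsLeast {n : ℤ | ∃ D : Finset α, X ⊆ D ∧ n = d0 D} (d X))
    (A : Finset α)
    (hclosed : ∀ b : α, d (insert b A) = d A → b ∈ A) :
    d A = d0 A ∧ ∀ D : Finset α, A ⊆ D → d0 A ≤ d0 D := by
  obtain ⟨D, hAD, hdA⟩ := (hd A).1
  have hDA : D = A := Finset.Subset.antisymm
    (fun b hb => hclosed b (dim_insert_eq_of_mem_of_dim_eq hd hAD hdA hb)) hAD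
  subst hDA
  exact ⟨hdA, fun E hAE => hdA ▸ dim_le_predim_of_subset hd hAE⟩

/-- let `d₀` be a submodular predimension function on finite subsets of
the ambient set (`d₀(∅) = 0`, `d₀` of singletons at most 1, submodularity), and let
`d` be the associated dimension (`d(X)` is the minimum of `d₀` over finite supersets
of `X`). If `A` is `d`-closed (every point depending on `A` lies in `A`), then
`d(A) = d₀(A)`: `A` is self-sufficient and its dimension equals its predimension. -/
theorem stmt19 (d0 : Finset α → ℤ)
    (h0 : d0 ∅ = 0)
    (h1 : ∀ a : α, d0 {a} ≤ 1)
    (hsub : ∀ X Y : Finset α, d0 (X ∪ Y) ≤ d0 X + d0 Y - d0 (X ∩ Y))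
    (d : Finset α → ℤ)
    (hd : ∀ X : Finset α,
      IsLeast {n : ℤ | ∃ D : Finset α, X ⊆ D ∧ n = d0 D} (d X))
    (A : Finset α)
    (hclosed : ∀ b : α, d (insert b A) = d A → b ∈ A) :
    d A = d0 A ∧ ∀ D : Finset α, A ⊆ D → d0 A ≤ d0 D :=
  stmt19_general d0 d hd A hclosed
end
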